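/- arXiv:1307.0570 — 3 statements merged into one kernel-verified Lean document; each statement's English description precedes it below -/
import Mathlib

section
/- Define P_{j,n} = ∑_{i=0}^{j-1} C(n,i) (m(n)/n)^i (1 - m(n)/n)^{n-i}, where m(n) = ⌈k(n) ln n⌉ and k(n) satisfies 1 < k(n) < n, k(n) = o(n/ln n). Then lim_{n→∞} max_{1 ≤ j ≤ k(n)} P_{j,n} = 0. -/
/-!
Bounding `C(n, i)` by `n ^ i` and `1 - p` by `exp (-p)`, each of the `j ≤ K` terms of the tail is
at most `m ^ K * exp (-p * (n - K))`, where `m = n p = ⌈K log n⌉`. Writing `m ≤ a n` with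
`a = (K log n + 1) / n`, the factor `exp (-p * (n - K)) ≤ n ^ (-K) * exp (a K)` cancels the
`n ^ K` in `m ^ K`, so the whole tail is at most `exp (K (1 + a + log a) - 1)`. Once
`a ≤ exp (-2)` we have `1 + a + log a ≤ 0`, so `K ≥ 1` may be replaced by `1`, leaving
`a * exp a`, which tends to `0`.
-/

open Filter Real Finset Topology

/-- `ℙ(Binomial(n, p) < j)`. -/
noncomputable def binomialLowerTail (n : ℕ) (p : ℝ) (j : ℕ) : ℝ :=
  ∑ i ∈ range j, (n.choose i : ℝ) * p ^ i * (1 - p) ^ (n - i)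

lemma choose_mul_pow_mul_one_sub_pow_le {p : ℝ} (hp₀ : 0 ≤ p) (hp₁ : p ≤ 1) (n i : ℕ) :
    (n.choose i : ℝ) * p ^ i * (1 - p) ^ (n - i) ≤ (n * p) ^ i * exp (-(p * (n - i))) := by
  rcases le_or_gt i n with hin | hni
  · have hchoose : (n.choose i : ℝ) ≤ (n : ℝ) ^ i := by exact_mod_cast Nat.choose_le_pow n i
    have hexp : (1 - p) ^ (n - i) ≤ exp (-(p * (n - i))) :=
      calc (1 - p) ^ (n - i) ≤ exp (-p) ^ (n - i) :=
            pow_le_pow_left₀ (by linarith) (by linarith [add_one_le_exp (-p)]) _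
        _ = exp (-(p * (n - i))) := by rw [← exp_nat_mul, Nat.cast_sub hin]; ring_nf
    rw [mul_pow]
    gcongr
  · rw [Nat.choose_eq_zero_of_lt hni, Nat.cast_zero, zero_mul, zero_mul]
    positivity

lemma binomialLowerTail_le {n j K : ℕ} {p : ℝ} (hp₀ : 0 ≤ p) (hp₁ : p ≤ 1) (hnp : 1 ≤ n * p)
    (hjK : j ≤ K) :
    binomialLowerTail n p j ≤ K * ((n * p) ^ K * exp (-(p * (n - K)))) := by
  have hterm : ∀ i ∈ range j, (n.choose i : ℝ) * p ^ i * (1 - p) ^ (n - i) ≤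
      (n * p) ^ K * exp (-(p * (n - K))) := by
    intro i hi
    have hiK : i ≤ K := (mem_range.1 hi).le.trans hjK
    calc _ ≤ (n * p) ^ i * exp (-(p * (n - i))) := choose_mul_pow_mul_one_sub_pow_le hp₀ hp₁ n i
      _ ≤ (n * p) ^ K * exp (-(p * (n - K))) := by gcongr
  calc binomialLowerTail n p j ≤ ∑ _i ∈ range j, (n * p) ^ K * exp (-(p * (n - K))) :=
        sum_le_sum hterm
    _ = j * ((n * p) ^ K * exp (-(p * (n - K)))) := by rw [sum_const, card_range, nsmul_eq_mul]
    _ ≤ K * ((n * p) ^ K * exp (-(p * (n - K)))) := by gcongr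

lemma natCast_mul_pow_mul_exp_neg_le {K : ℕ} {n m a : ℝ} (hK : 1 ≤ K) (hn : 0 < n) (hm : 0 < m)
    (hKm : K * log n ≤ m) (hma : m ≤ a * n) (ha : a ≤ exp (-2)) :
    K * (m ^ K * exp (-(m / n * (n - K)))) ≤ a * exp a := by
  have ha₀ : 0 < a := pos_of_mul_pos_left (hm.trans_le hma) hn.le
  have hK₁ : (1 : ℝ) ≤ K := by exact_mod_cast hK
  have hlogK : log K ≤ K - 1 := log_le_sub_one_of_pos (by positivity)
  have hlogm : log m ≤ log a + log n := by
    rw [← log_mul ha₀.ne' hn.ne']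
    exact log_le_log hm hma
  have hloss : K * log n - a * K ≤ m / n * (n - K) := by
    have : m / n * K ≤ a * K := by gcongr; rwa [div_le_iff₀ hn]
    rw [mul_sub, div_mul_cancel₀ m hn.ne']
    linarith
  have hloga : 1 + a + log a ≤ 0 := by
    have : log a ≤ -2 := by rw [← log_exp (-2)]; exact log_le_log ha₀ ha
    linarith [ha.trans (exp_le_one_iff.2 (by norm_num : (-2 : ℝ) ≤ 0))]
  calc K * (m ^ K * exp (-(m / n * (n - K))))
      = exp (log K + K * log m - m / n * (n - K)) := by
        rw [exp_sub, exp_add, exp_log (by positivity), ← log_pow, exp_log (by positivity), exp_neg]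
        ring
    _ ≤ exp (K * (1 + a + log a) - 1) := by
        have := mul_le_mul_of_nonneg_left hlogm (Nat.cast_nonneg K)
        exact exp_le_exp.2 (by linarith)
    _ ≤ exp (log a + a) := by
        have := mul_le_mul_of_nonpos_right hK₁ hloga
        exact exp_le_exp.2 (by linarith)
    _ = a * exp a := by rw [exp_add, exp_log ha₀]

lemma binomialLowerTail_ceil_le {n j K : ℕ} (hn : 1 < n) (hj : 1 ≤ j) (hjK : j ≤ K)
    (ha : (K * log n + 1) / n ≤ exp (-2)) :
    binomialLowerTail n (⌈K * log n⌉₊ / n) j ≤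
      (K * log n + 1) / n * exp ((K * log n + 1) / n) := by
  set a : ℝ := (K * log n + 1) / n
  set m : ℕ := ⌈K * log n⌉₊
  have hn₀ : (0 : ℝ) < n := by positivity
  have hKlog : 0 < K * log n :=
    mul_pos (by exact_mod_cast hj.trans hjK) (log_pos (by exact_mod_cast hn))
  have hm : (1 : ℝ) ≤ m := by exact_mod_cast Nat.ceil_pos.2 hKlog
  have hma : (m : ℝ) ≤ a * n := by
    rw [div_mul_cancel₀ _ hn₀.ne']
    exact (Nat.ceil_lt_add_one hKlog.le).le
  have ha₁ : a ≤ 1 := ha.trans (exp_le_one_iff.2 (by norm_num))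
  have hmn : (m : ℝ) ≤ n := hma.trans (mul_le_of_le_one_left hn₀.le ha₁)
  have hnp : (n : ℝ) * (m / n) = m := mul_div_cancel₀ _ hn₀.ne'
  calc binomialLowerTail n (m / n) j ≤ K * ((n * (m / n)) ^ K * exp (-(m / n * (n - K)))) :=
        binomialLowerTail_le (by positivity) ((div_le_one hn₀).2 hmn) (hm.trans_eq hnp.symm) hjK
    _ ≤ a * exp a := by
        rw [hnp]
        exact natCast_mul_pow_mul_exp_neg_le (hj.trans hjK) hn₀ (by linarith) (Nat.le_ceil _) hma ha

theorem binomial_tail_max_to_zero_general (k : ℕ → ℕ)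
    (hko : Filter.Tendsto (fun n => (k n : ℝ) * Real.log n / n) atTop (nhds 0)) :
    ∀ ε > (0:ℝ), ∃ N : ℕ, ∀ n ≥ N, ∀ j : ℕ, 1 ≤ j → j ≤ k n →
      (∑ i ∈ Finset.range j, (n.choose i : ℝ) *
          ((⌈(k n : ℝ) * Real.log n⌉₊ : ℝ) / n) ^ i *
          (1 - (⌈(k n : ℝ) * Real.log n⌉₊ : ℝ) / n) ^ (n - i)) < ε := by
  intro ε hε
  set a : ℕ → ℝ := fun n => ((k n : ℝ) * log n + 1) / n
  have ha : Tendsto a atTop (𝓝 0) := by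
    simpa [a, add_div] using hko.add tendsto_one_div_atTop_nhds_zero_nat
  have ha_exp : Tendsto (fun n => a n * exp (a n)) atTop (𝓝 0) := by
    simpa using ha.mul ((continuous_exp.tendsto 0).comp ha)
  obtain ⟨N, hN⟩ := eventually_atTop.1 <| (ha.eventually_le_const (exp_pos (-2))).and <|
    (ha_exp.eventually_lt_const hε).and (eventually_gt_atTop 1)
  refine ⟨N, fun n hn j hj hjk => ?_⟩
  obtain ⟨hsmall, hlt, hn₁⟩ := hN n hn
  exact (binomialLowerTail_ceil_le hn₁ hj hjk hsmall).trans_lt hlt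

/-- Binomial tail probability bound: with m(n) = ⌈k(n) ln n⌉ and k(n) = o(n/ln n),
    max_{1 ≤ j ≤ k(n)} P_{j,n} → 0. -/
theorem binomial_tail_max_to_zero (k : ℕ → ℕ)
    (hk : ∀ n, 2 ≤ n → 1 < k n ∧ k n < n)
    (hko : Filter.Tendsto (fun n => (k n : ℝ) * Real.log n / n) atTop (nhds 0)) :
    ∀ ε > (0:ℝ), ∃ N : ℕ, ∀ n ≥ N, ∀ j : ℕ, 1 ≤ j → j ≤ k n →
      (∑ i ∈ Finset.range j, (n.choose i : ℝ) *
          ((⌈(k n : ℝ) * Real.log n⌉₊ : ℝ) / n) ^ i *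
          (1 - (⌈(k n : ℝ) * Real.log n⌉₊ : ℝ) / n) ^ (n - i)) < ε :=
  binomial_tail_max_to_zero_general k hko
end

section
/- Under the hypotheses of the previous lemma (m(n) = ⌈k(n) ln n⌉, 1 < k(n) < n, k(n) = o(n/ln n)), the bound P_{k,n} ≤ 2 (1 - m/n)^n m^k holds for all sufficiently large n, where P_{k,n} = ∑_{i=0}^{k-1} C(n,i)(m/n)^i (1-m/n)^{n-i} with k = k(n), m = m(n). -/
open Filter

lemma two_pow_le_two_mul_factorial (i : ℕ) : 2 ^ i ≤ 2 * i.factorial := by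
  induction i with
  | zero => simp
  | succ i ih =>
    rcases Nat.eq_zero_or_pos i with h | h
    · subst h; norm_num
    · rw [pow_succ, Nat.factorial_succ]
      have h2 : 2 * i.factorial ≤ (i + 1) * i.factorial :=
        Nat.mul_le_mul_right _ (by omega)
      calc 2 ^ i * 2 ≤ 2 * i.factorial * 2 := Nat.mul_le_mul_right _ ih
        _ = 2 * (2 * i.factorial) := by ring
        _ ≤ 2 * ((i + 1) * i.factorial) := Nat.mul_le_mul_left _ h2

lemma geom_sum_le_pow (m K : ℕ) (hm : 2 ≤ m) :
    ∑ i ∈ Finset.range K, m ^ i ≤ m ^ K := by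
  induction K with
  | zero => simp
  | succ K ih =>
    rw [Finset.sum_range_succ, pow_succ]
    have : m ^ K * 2 ≤ m ^ K * m := Nat.mul_le_mul_left _ hm
    omega

lemma term_bound (n i m : ℕ) (hi : i ≤ n) (hn : 0 < n)
    (hp : (m : ℝ) / n ≤ 1 / 2) :
    (n.choose i : ℝ) * ((m : ℝ) / n) ^ i * (1 - (m : ℝ) / n) ^ (n - i) ≤
      2 * (m : ℝ) ^ i * (1 - (m : ℝ) / n) ^ n := by
  set p : ℝ := (m : ℝ) / n with hpdef
  have hq0 : (0 : ℝ) ≤ 1 - p := by linarith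
  have hq2 : (1 : ℝ) / 2 ≤ 1 - p := by linarith
  have hnpos : (0 : ℝ) < n := by exact_mod_cast hn
  have hfac : (0 : ℝ) < (i.factorial : ℝ) := by exact_mod_cast i.factorial_pos
  -- choose bound
  have h1 : (n.choose i : ℝ) * p ^ i ≤ (m : ℝ) ^ i / i.factorial := by
    have hc : (n.choose i : ℝ) ≤ (n : ℝ) ^ i / i.factorial :=
      Nat.choose_le_pow_div i n
    have hppow : p ^ i = (m : ℝ) ^ i / (n : ℝ) ^ i := div_pow _ _ _
    rw [le_div_iff₀ hfac] at hc ⊢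
    rw [hppow]
    calc (n.choose i : ℝ) * ((m:ℝ)^i / (n:ℝ)^i) * (i.factorial : ℝ)
        = ((n.choose i : ℝ) * (i.factorial : ℝ)) * ((m:ℝ)^i / (n:ℝ)^i) := by ring
      _ ≤ (n:ℝ)^i * ((m:ℝ)^i / (n:ℝ)^i) := by
          apply mul_le_mul_of_nonneg_right hc (by positivity)
      _ = (m:ℝ)^i := by field_simp
  -- power bound
  have h2 : (1 - p) ^ (n - i) ≤ 2 ^ i * (1 - p) ^ n := by
    have hsplit : (1 - p) ^ n = (1 - p) ^ (n - i) * (1 - p) ^ i := by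
      rw [← pow_add]; congr 1; omega
    have hqi : (1 / 2 : ℝ) ^ i ≤ (1 - p) ^ i :=
      pow_le_pow_left₀ (by norm_num) hq2 i
    have : (1 - p) ^ (n - i) * (1 / 2 : ℝ) ^ i ≤ (1 - p) ^ n := by
      rw [hsplit]
      exact mul_le_mul_of_nonneg_left hqi (by positivity)
    calc (1 - p) ^ (n - i) = ((1 - p) ^ (n - i) * (1 / 2 : ℝ) ^ i) * 2 ^ i := by
          rw [mul_assoc, ← mul_pow]; norm_num
      _ ≤ (1 - p) ^ n * 2 ^ i := by
          apply mul_le_mul_of_nonneg_right this (by positivity)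
      _ = 2 ^ i * (1 - p) ^ n := mul_comm _ _
  have h3 : (2 : ℝ) ^ i ≤ 2 * i.factorial := by
    exact_mod_cast two_pow_le_two_mul_factorial i
  have hchoose_pi : (0 : ℝ) ≤ (n.choose i : ℝ) * p ^ i := by positivity
  calc (n.choose i : ℝ) * p ^ i * (1 - p) ^ (n - i)
      ≤ (n.choose i : ℝ) * p ^ i * (2 ^ i * (1 - p) ^ n) :=
        mul_le_mul_of_nonneg_left h2 hchoose_pi
    _ ≤ ((m : ℝ) ^ i / i.factorial) * (2 ^ i * (1 - p) ^ n) := by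
        apply mul_le_mul_of_nonneg_right h1 (by positivity)
    _ = ((2 : ℝ) ^ i / i.factorial) * ((m : ℝ) ^ i * (1 - p) ^ n) := by ring
    _ ≤ 2 * ((m : ℝ) ^ i * (1 - p) ^ n) := by
        apply mul_le_mul_of_nonneg_right _ (by positivity)
        rw [div_le_iff₀ hfac]
        linarith
    _ = 2 * (m : ℝ) ^ i * (1 - p) ^ n := by ring

/-- For large n, P_{k,n} ≤ 2 (1 - m/n)ⁿ mᵏ, where m = ⌈k(n) ln n⌉. -/
theorem binomial_tail_bound (k : ℕ → ℕ)
    (hk : ∀ n, 2 ≤ n → 1 < k n ∧ k n < n)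
    (hko : Filter.Tendsto (fun n => (k n : ℝ) * Real.log n / n) atTop (nhds 0)) :
    ∃ N : ℕ, ∀ n ≥ N,
      (∑ i ∈ Finset.range (k n), (n.choose i : ℝ) *
          ((⌈(k n : ℝ) * Real.log n⌉₊ : ℝ) / n) ^ i *
          (1 - (⌈(k n : ℝ) * Real.log n⌉₊ : ℝ) / n) ^ (n - i)) ≤
        2 * (1 - (⌈(k n : ℝ) * Real.log n⌉₊ : ℝ) / n) ^ n *
          (⌈(k n : ℝ) * Real.log n⌉₊ : ℝ) ^ (k n) := by
  have hev : ∀ᶠ n in atTop, (k n : ℝ) * Real.log n / n < 1 / 4 :=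
    hko.eventually (eventually_lt_nhds (by norm_num))
  obtain ⟨N₀, hN₀⟩ := eventually_atTop.mp hev
  refine ⟨max N₀ 4, fun n hn => ?_⟩
  have hn4 : 4 ≤ n := le_trans (le_max_right _ _) hn
  have hnN₀ : N₀ ≤ n := le_trans (le_max_left _ _) hn
  obtain ⟨hk1, hkn⟩ := hk n (by omega)
  set x : ℝ := (k n : ℝ) * Real.log n with hxdef
  set m : ℕ := ⌈x⌉₊ with hmdef
  have hnpos : (0 : ℝ) < n := by exact_mod_cast (by omega : 0 < n)
  have hn4r : (4 : ℝ) ≤ n := by exact_mod_cast hn4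
  have hlog : 1 ≤ Real.log n := by
    rw [Real.le_log_iff_exp_le hnpos]
    calc Real.exp 1 ≤ 2.7182818286 := Real.exp_one_lt_d9.le
      _ ≤ (n : ℝ) := by linarith
  have hkr : (2 : ℝ) ≤ (k n : ℝ) := by exact_mod_cast hk1
  have hx2 : (2 : ℝ) ≤ x := by
    calc (2 : ℝ) = 2 * 1 := by norm_num
      _ ≤ (k n : ℝ) * Real.log n := by
          apply mul_le_mul hkr hlog (by norm_num) (by linarith)
  have hm2 : 2 ≤ m := by
    have : 1 < m := Nat.lt_ceil.mpr (by push_cast; linarith)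
    omega
  have hx_lt : x < (n : ℝ) / 4 := by
    have := hN₀ n hnN₀
    rw [div_lt_iff₀ hnpos] at this
    linarith
  have hm_le : (m : ℝ) ≤ (n : ℝ) / 2 := by
    have h1 : (m : ℝ) < x + 1 := Nat.ceil_lt_add_one (by linarith)
    linarith
  have hp : (m : ℝ) / n ≤ 1 / 2 := by
    rw [div_le_iff₀ hnpos]; linarith
  have hq0 : (0 : ℝ) ≤ 1 - (m : ℝ) / n := by linarith
  calc (∑ i ∈ Finset.range (k n), (n.choose i : ℝ) * ((m : ℝ) / n) ^ i *
          (1 - (m : ℝ) / n) ^ (n - i))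
      ≤ ∑ i ∈ Finset.range (k n), 2 * (m : ℝ) ^ i * (1 - (m : ℝ) / n) ^ n := by
        apply Finset.sum_le_sum
        intro i hi
        have hik : i < k n := Finset.mem_range.mp hi
        exact term_bound n i m (by omega) (by omega) hp
    _ = 2 * (1 - (m : ℝ) / n) ^ n * ∑ i ∈ Finset.range (k n), (m : ℝ) ^ i := by
        rw [Finset.mul_sum]
        apply Finset.sum_congr rfl
        intros; ring
    _ ≤ 2 * (1 - (m : ℝ) / n) ^ n * (m : ℝ) ^ (k n) := by
        apply mul_le_mul_of_nonneg_left _ (by positivity)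
        exact_mod_cast geom_sum_le_pow m (k n) hm2
end

section
/- Let n ≥ 2, α_1 = 1, α_2 = 1, α_i = 1/(n-2) for 3 ≤ i ≤ n, and fixed-point equation ∑_{i=1}^n α_i Θ_{i:n}(R_n) = q N with q = ∑ α_i = 3 and N ∈ [0,1] fixed. Then (this is the (p,q)-sequence with p = 2, q = 3, k(n) = 2): if N < 2/3 the fixed points satisfy lim_{n→∞} R_n = 0, and if N > 2/3 then lim_{n→∞} R_n = 3N - 2. -/
open Filter

noncomputable def theta (n k : ℕ) (R : ℝ) : ℝ :=
  ∑ i ∈ Finset.Icc k n, (n.choose i : ℝ) * R ^ i * (1 - R) ^ (n - i)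

/-!
Summing the tail probabilities of `X ~ Bin(n, x)` gives `∑_{i=1}^n Θ_{i:n}(x) = E X = n x`,
so the fixed-point equation is equivalent to
`x = 3N - 2 + (6 - 6N)/n + (1 - 3/n) D_n(x)` with `D_n(x) = 2 - Θ_{1:n}(x) - Θ_{2:n}(x)`.
The defect `D_n(x) = 2(1-x)^n + n x (1-x)^(n-1)` is at most `(n+2)(1-x)^(n-1)`, which decays
geometrically as long as `x` stays away from `0`. For `N < 2/3` this forces `R_n → 0`, since
otherwise `R_n ≤ 3N - 2 + o(1) < 0`; for `N > 2/3` it gives `3N - 2 ≤ R_n ≤ 3N - 2 + o(1)`.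
-/

open Topology Polynomial Finset

lemma theta_eq_sum_eval_bernsteinPolynomial (n k : ℕ) (x : ℝ) :
    theta n k x = ∑ i ∈ Icc k n, (bernsteinPolynomial ℝ n i).eval x := by
  simp [theta, bernsteinPolynomial]

lemma theta_zero_right (n : ℕ) (x : ℝ) : theta n 0 x = 1 := by
  rw [theta_eq_sum_eval_bernsteinPolynomial, ← Nat.range_succ_eq_Icc_zero, ← eval_finsetSum,
    bernsteinPolynomial.sum, eval_one]

lemma theta_eq_add_theta_succ {n k : ℕ} (h : k ≤ n) (x : ℝ) :
    theta n k x = n.choose k * x ^ k * (1 - x) ^ (n - k) + theta n (k + 1) x := by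
  rw [theta, ← add_sum_Ioc_eq_sum_Icc h, ← Icc_add_one_left_eq_Ioc, theta]

lemma sum_theta_Icc_one (n : ℕ) (x : ℝ) : ∑ k ∈ Icc 1 n, theta n k x = n * x := by
  have h := congr_arg (eval x) (bernsteinPolynomial.sum_smul (R := ℝ) n)
  rw [eval_finsetSum, Nat.range_succ_eq_Icc_zero, ← add_sum_Ioc_eq_sum_Icc n.zero_le,
    ← Icc_add_one_left_eq_Ioc] at h
  simp only [zero_smul, nsmul_eq_mul, eval_zero, eval_mul, eval_natCast, eval_X, zero_add] at h
  rw [← h]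
  simp_rw [theta_eq_sum_eval_bernsteinPolynomial]
  rw [sum_comm' (t' := Icc 1 n) (s' := fun i => Icc 1 i) (fun k i => by simp only [mem_Icc]; omega)]
  simp

/-- The defect `D_n(x) = 2 - Θ_{1:n}(x) - Θ_{2:n}(x)`. -/
noncomputable def thetaDefect (n : ℕ) (x : ℝ) : ℝ :=
  2 * (1 - x) ^ n + n * x * (1 - x) ^ (n - 1)

lemma theta_one_add_theta_two {n : ℕ} (hn : 1 ≤ n) (x : ℝ) :
    theta n 1 x + theta n 2 x = 2 - thetaDefect n x := by
  have h0 := theta_eq_add_theta_succ n.zero_le x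
  have h1 := theta_eq_add_theta_succ hn x
  simp only [theta_zero_right, Nat.choose_zero_right, Nat.choose_one_right, pow_zero, pow_one,
    Nat.sub_zero, zero_add, Nat.cast_one, one_mul] at h0 h1
  rw [thetaDefect]
  linarith

lemma eq_of_sum_weighted_theta_eq {n : ℕ} (hn : 3 ≤ n) {x N : ℝ}
    (h : ∑ i ∈ Icc 1 n,
      (if i ≤ 2 then (1 : ℝ) else 1 / ((n : ℝ) - 2)) * theta n i x = 3 * N) :
    x = 3 * N - 2 + (6 - 6 * N) / n + (1 - 3 / n) * thetaDefect n x := by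
  have hsplit (f : ℕ → ℝ) : ∑ i ∈ Icc 1 n, f i = f 1 + f 2 + ∑ i ∈ Icc 3 n, f i := by
    rw [← add_sum_Ioc_eq_sum_Icc (by omega), ← Icc_add_one_left_eq_Ioc,
      ← add_sum_Ioc_eq_sum_Icc (by omega : 1 + 1 ≤ n), ← Icc_add_one_left_eq_Ioc]
    simp only [Nat.reduceAdd, add_assoc]
  have htail : ∑ i ∈ Icc 3 n, theta n i x = n * x - 2 + thetaDefect n x := by
    have := sum_theta_Icc_one n x
    rw [hsplit, theta_one_add_theta_two (by omega)] at this
    linarith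
  have hweights :
      ∑ i ∈ Icc 3 n, (if i ≤ 2 then (1 : ℝ) else 1 / ((n : ℝ) - 2)) * theta n i x
        = 1 / ((n : ℝ) - 2) * ∑ i ∈ Icc 3 n, theta n i x := by
    rw [mul_sum]
    refine sum_congr rfl fun i hi => ?_
    rw [if_neg (by rw [mem_Icc] at hi; omega)]
  rw [hsplit, hweights, htail, if_pos (by norm_num), if_pos le_rfl, one_mul, one_mul,
    theta_one_add_theta_two (by omega)] at h
  have hn' : (3 : ℝ) ≤ n := by exact_mod_cast hn
  have hn2 : (n : ℝ) - 2 ≠ 0 := by linarith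
  have hn0 : (n : ℝ) ≠ 0 := by linarith
  field_simp at h ⊢
  linear_combination h

lemma thetaDefect_nonneg {x : ℝ} (hx0 : 0 ≤ x) (hx1 : x ≤ 1) (n : ℕ) :
    0 ≤ thetaDefect n x := by
  have : 0 ≤ 1 - x := by linarith
  unfold thetaDefect
  positivity

lemma thetaDefect_le {x r : ℝ} (hx0 : 0 ≤ x) (hx1 : x ≤ 1) (hr : 1 - x ≤ r) (n : ℕ) :
    thetaDefect n x ≤ (n + 2) * r ^ (n - 1) := by
  have h0 : 0 ≤ 1 - x := by linarith
  have hpow : (1 - x) ^ (n - 1) ≤ r ^ (n - 1) := pow_le_pow_left₀ h0 hr _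
  have hn : (1 - x) ^ n ≤ (1 - x) ^ (n - 1) := pow_le_pow_of_le_one h0 (by linarith) (n.sub_le 1)
  have hx : (n : ℝ) * x * (1 - x) ^ (n - 1) ≤ n * (1 - x) ^ (n - 1) :=
    mul_le_mul_of_nonneg_right (mul_le_of_le_one_right n.cast_nonneg hx1) (pow_nonneg h0 _)
  unfold thetaDefect
  nlinarith

lemma tendsto_natCast_add_two_mul_pow_sub_one {r : ℝ} (h0 : 0 ≤ r) (h1 : r < 1) :
    Tendsto (fun n : ℕ => ((n : ℝ) + 2) * r ^ (n - 1)) atTop (𝓝 0) := by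
  rw [← tendsto_add_atTop_iff_nat 1]
  have h := (tendsto_self_mul_const_pow_of_lt_one h0 h1).add
    ((tendsto_pow_atTop_nhds_zero_of_lt_one h0 h1).const_mul 3)
  rw [zero_add, mul_zero] at h
  refine h.congr fun n => ?_
  push_cast
  ring

lemma tendsto_zero_of_le_add_thetaDefect {x e : ℕ → ℝ} {c : ℝ} (hc : c < 0)
    (he : Tendsto e atTop (𝓝 0))
    (hx : ∀ᶠ n in atTop, 0 ≤ x n ∧ x n ≤ 1 ∧ x n ≤ c + e n + thetaDefect n (x n)) :
    Tendsto x atTop (𝓝 0) := by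
  refine tendsto_order.2 ⟨fun a ha => hx.mono fun n hn => ha.trans_le hn.1, fun ε hε => ?_⟩
  set δ := min ε 1
  have hδε : δ ≤ ε := min_le_left ε 1
  have hδ : 0 < δ := lt_min hε one_pos
  have hbound := (tendsto_const_nhds (x := c)).add he |>.add
    (tendsto_natCast_add_two_mul_pow_sub_one (r := 1 - δ) (by linarith [min_le_right ε 1])
      (by linarith))
  rw [add_zero, add_zero] at hbound
  filter_upwards [hx, hbound.eventually_lt_const (hc.trans hδ)] with n ⟨h0, h1, hle⟩ hlt
  by_contra! hεn
  linarith [thetaDefect_le h0 h1 (by linarith : 1 - x n ≤ 1 - δ) n]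

lemma tendsto_of_le_add_thetaDefect {x e : ℕ → ℝ} {c : ℝ} (hc0 : 0 < c) (hc1 : c ≤ 1)
    (he : Tendsto e atTop (𝓝 0))
    (hx : ∀ᶠ n in atTop, c ≤ x n ∧ x n ≤ 1 ∧ x n ≤ c + e n + thetaDefect n (x n)) :
    Tendsto x atTop (𝓝 c) := by
  have hbound := (tendsto_const_nhds (x := c)).add he |>.add
    (tendsto_natCast_add_two_mul_pow_sub_one (r := 1 - c) (by linarith) (by linarith))
  rw [add_zero, add_zero] at hbound
  refine tendsto_of_tendsto_of_tendsto_of_le_of_le' tendsto_const_nhds hbound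
    (hx.mono fun n hn => hn.1) ?_
  filter_upwards [hx] with n ⟨hcx, h1, hle⟩
  linarith [thetaDefect_le (hc0.le.trans hcx) h1 (by linarith : 1 - x n ≤ 1 - c) n]

/-- BS-like example: α₁ = α₂ = 1, αᵢ = 1/(n-2) for i ≥ 3 (a (2,3)-sequence).
    If R n solves ∑ αᵢ Θ_{i:n}(R n) = 3N then R n → 0 if N < 2/3 and
    R n → 3N - 2 if N > 2/3. -/
theorem bs_example_limit (N : ℝ) (hN : N ∈ Set.Icc (0:ℝ) 1) (R : ℕ → ℝ)
    (hR : ∀ n, 3 ≤ n → R n ∈ Set.Icc (0:ℝ) 1 ∧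
      (∑ i ∈ Finset.Icc 1 n,
          (if i ≤ 2 then (1:ℝ) else 1 / ((n : ℝ) - 2)) * theta n i (R n)) = 3 * N) :
    (N < 2/3 → Filter.Tendsto R atTop (nhds 0)) ∧
    (N > 2/3 → Filter.Tendsto R atTop (nhds (3 * N - 2))) := by
  set e : ℕ → ℝ := fun n => (6 - 6 * N) / n
  have he : Tendsto e atTop (𝓝 0) := tendsto_const_div_atTop_nhds_zero_nat _
  have hbounds : ∀ᶠ n in atTop, R n ∈ Set.Icc 0 1 ∧ 3 * N - 2 + e n ≤ R n ∧
      R n ≤ 3 * N - 2 + e n + thetaDefect n (R n) := by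
    filter_upwards [eventually_ge_atTop 3] with n hn
    obtain ⟨hRn, heq⟩ := hR n hn
    have hfix := eq_of_sum_weighted_theta_eq hn heq
    have hD := thetaDefect_nonneg hRn.1 hRn.2 n
    have hw : 3 / (n : ℝ) ≤ 1 := by
      rw [div_le_one (by positivity)]
      exact_mod_cast hn
    have hw' : 0 ≤ 3 / (n : ℝ) := by positivity
    exact ⟨hRn, by nlinarith, by nlinarith⟩
  refine ⟨fun hlt => tendsto_zero_of_le_add_thetaDefect (c := 3 * N - 2) (by linarith) he ?_,
    fun hgt => tendsto_of_le_add_thetaDefect (by linarith) (by linarith [hN.2]) he ?_⟩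
  · exact hbounds.mono fun n ⟨h01, _, hle⟩ => ⟨h01.1, h01.2, hle⟩
  · filter_upwards [hbounds] with n ⟨h01, hlo, hle⟩
    have : 0 ≤ e n := div_nonneg (by linarith [hN.2]) n.cast_nonneg
    exact ⟨by linarith, h01.2, hle⟩
end
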